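/- arXiv:2110.15587 — 2 statements merged into one kernel-verified Lean document; each statement's English description precedes it below -/
import Mathlib

section
/- Let G = (V, w_G) be a weighted graph, 0 < ε < 1/3, H an ε-cut sparsifier of G, F a maximum s-t flow in H of value f_H, and H' the graph with weights w_H(e) − F(e). Then for every minimum s-t cut Δ_G(X) of G (with s ∈ X, t ∉ X), the residual cut weight satisfies w_{H'}(Δ(X)) ≤ (2ε/(1−ε))·f_H. -/
/-!
A flow of value `f_H` carries exactly `f_H` across every `s`-`t` cut, so the residual weight of
the cut `X` is at most `w_H(Δ(X)) - f_H`. The sparsifier bounds give `w_H(Δ(X)) ≤ (1+ε) λ_st(G)`,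
and, since every cut of `H` is at least `(1-ε)` times a cut of `G`,
`(1-ε) λ_st(G) ≤ λ_st(H) = f_H`. Hence the residual is at most `((1+ε)/(1-ε) - 1) f_H`.
-/

open Finset

variable {V : Type*} [Fintype V] [DecidableEq V]

/-- Total weight of the cut determined by shore `X`. -/
def cutWeight (w : V → V → ℝ) (X : Finset V) : ℝ :=
  ∑ u ∈ X, ∑ v ∈ Xᶜ, w u v

/-- Minimum `s`-`t` cut value. -/
noncomputable def minCut (w : V → V → ℝ) (s t : V) : ℝ :=
  sInf {r : ℝ | ∃ X : Finset V, s ∈ X ∧ t ∉ X ∧ cutWeight w X = r}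

theorem Finset.sum_sum_eq_zero_of_antisymm {α M : Type*} [AddCommGroup M] [IsAddTorsionFree M]
    (f : α → α → M) (hf : ∀ u v, f u v = -f v u) (X : Finset α) :
    ∑ u ∈ X, ∑ v ∈ X, f u v = 0 := by
  have h : ∑ u ∈ X, ∑ v ∈ X, f u v = -∑ u ∈ X, ∑ v ∈ X, f u v :=
    calc ∑ u ∈ X, ∑ v ∈ X, f u v = ∑ u ∈ X, ∑ v ∈ X, -f v u :=
          Finset.sum_congr rfl fun u _ => Finset.sum_congr rfl fun v _ => hf u v
      _ = -∑ u ∈ X, ∑ v ∈ X, f v u := by simp only [Finset.sum_neg_distrib]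
      _ = -∑ u ∈ X, ∑ v ∈ X, f u v := by rw [Finset.sum_comm]
  exact self_eq_neg.mp h

theorem cutWeight_sub (w w' : V → V → ℝ) (X : Finset V) :
    cutWeight (fun u v => w u v - w' u v) X = cutWeight w X - cutWeight w' X := by
  simp only [cutWeight, Finset.sum_sub_distrib]

theorem cutWeight_mono {w w' : V → V → ℝ} (h : ∀ u v, w u v ≤ w' u v) (X : Finset V) :
    cutWeight w X ≤ cutWeight w' X :=
  Finset.sum_le_sum fun u _ => Finset.sum_le_sum fun v _ => h u v

theorem cutWeight_nonneg {w : V → V → ℝ} (hw : ∀ u v, 0 ≤ w u v) (X : Finset V) :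
    0 ≤ cutWeight w X :=
  Finset.sum_nonneg fun u _ => Finset.sum_nonneg fun v _ => hw u v

theorem cutWeight_eq_flow_value {f : V → V → ℝ} (hskew : ∀ u v, f u v = -f v u) {s t : V}
    (hcons : ∀ u, u ≠ s → u ≠ t → ∑ v, f u v = 0) {X : Finset V} (hsX : s ∈ X) (htX : t ∉ X) :
    cutWeight f X = ∑ v, f s v := by
  have hrows : ∑ u ∈ X, ∑ v, f u v = ∑ v, f s v :=
    Finset.sum_eq_single_of_mem s hsX fun u hu hus => hcons u hus (ne_of_mem_of_not_mem hu htX)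
  rw [← hrows, cutWeight]
  simp only [← Finset.sum_add_sum_compl X (f _), Finset.sum_add_distrib,
    Finset.sum_sum_eq_zero_of_antisymm f hskew, zero_add]

theorem minCut_le {w : V → V → ℝ} (hw : ∀ u v, 0 ≤ w u v) {s t : V} {X : Finset V}
    (hsX : s ∈ X) (htX : t ∉ X) : minCut w s t ≤ cutWeight w X :=
  csInf_le ⟨0, by rintro r ⟨Y, -, -, rfl⟩; exact cutWeight_nonneg hw Y⟩ ⟨X, hsX, htX, rfl⟩

theorem le_minCut {w : V → V → ℝ} {s t : V} {X : Finset V} (hsX : s ∈ X) (htX : t ∉ X) {r : ℝ}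
    (h : ∀ Y : Finset V, s ∈ Y → t ∉ Y → r ≤ cutWeight w Y) : r ≤ minCut w s t :=
  le_csInf ⟨_, X, hsX, htX, rfl⟩ (by rintro _ ⟨Y, hsY, htY, rfl⟩; exact h Y hsY htY)

theorem mul_minCut_le_minCut {wG wH : V → V → ℝ} (hGnn : ∀ u v, 0 ≤ wG u v) {c : ℝ} (hc : 0 ≤ c)
    (hcut : ∀ Y : Finset V, c * cutWeight wG Y ≤ cutWeight wH Y) {s t : V} {X : Finset V}
    (hsX : s ∈ X) (htX : t ∉ X) : c * minCut wG s t ≤ minCut wH s t :=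
  le_minCut hsX htX fun Y hsY htY =>
    (mul_le_mul_of_nonneg_left (minCut_le hGnn hsY htY) hc).trans (hcut Y)

theorem stmt3_general (wG wH : V → V → ℝ) (ε : ℝ) (hε0 : 0 < ε) (hε1 : ε < 1/3)
    (hGnn : ∀ u v, 0 ≤ wG u v)
    (hsparsify : ∀ X : Finset V,
      (1 - ε) * cutWeight wG X ≤ cutWeight wH X ∧
        cutWeight wH X ≤ (1 + ε) * cutWeight wG X)
    (s t : V)
    -- `F` is a maximum `s`-`t` flow in `H`, in skew-symmetric representation
    (f : V → V → ℝ)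
    (hskew : ∀ u v, f u v = - f v u)
    (hcons : ∀ u, u ≠ s → u ≠ t → ∑ v, f u v = 0)
    (fH : ℝ) (hval : ∑ v, f s v = fH)
    (hmaxflow : fH = minCut wH s t)
    -- `X` is the shore of a minimum `s`-`t` cut of `G`
    (X : Finset V) (hsX : s ∈ X) (htX : t ∉ X)
    (hmincut : cutWeight wG X = minCut wG s t) :
    cutWeight (fun u v => wH u v - |f u v|) X ≤ (2 * ε / (1 - ε)) * fH := by
  have hε : 0 < 1 - ε := by linarith
  have hcross : fH ≤ cutWeight (fun u v => |f u v|) X :=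
    calc fH = cutWeight f X := (hval ▸ cutWeight_eq_flow_value hskew hcons hsX htX).symm
      _ ≤ _ := cutWeight_mono (fun u v => le_abs_self _) X
  have hupper : cutWeight wH X ≤ (1 + ε) * minCut wG s t := hmincut ▸ (hsparsify X).2
  have hlower : (1 - ε) * minCut wG s t ≤ fH :=
    hmaxflow ▸ mul_minCut_le_minCut hGnn hε.le (fun Y => (hsparsify Y).1) hsX htX
  rw [cutWeight_sub, div_mul_eq_mul_div, le_div_iff₀ hε]
  nlinarith

theorem stmt3 (wG wH : V → V → ℝ) (ε : ℝ) (hε0 : 0 < ε) (hε1 : ε < 1/3)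
    (hGsymm : ∀ u v, wG u v = wG v u) (hGnn : ∀ u v, 0 ≤ wG u v)
    (hHsymm : ∀ u v, wH u v = wH v u) (hHnn : ∀ u v, 0 ≤ wH u v)
    (hsub : ∀ u v, 0 < wH u v → 0 < wG u v)
    (hsparsify : ∀ X : Finset V,
      (1 - ε) * cutWeight wG X ≤ cutWeight wH X ∧
        cutWeight wH X ≤ (1 + ε) * cutWeight wG X)
    (s t : V) (hst : s ≠ t)
    -- `F` is a maximum `s`-`t` flow in `H`, in skew-symmetric representation
    (f : V → V → ℝ)
    (hskew : ∀ u v, f u v = - f v u)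
    (hcap : ∀ u v, |f u v| ≤ wH u v)
    (hcons : ∀ u, u ≠ s → u ≠ t → ∑ v, f u v = 0)
    (fH : ℝ) (hval : ∑ v, f s v = fH)
    (hmaxflow : fH = minCut wH s t)
    -- `X` is the shore of a minimum `s`-`t` cut of `G`
    (X : Finset V) (hsX : s ∈ X) (htX : t ∉ X)
    (hmincut : cutWeight wG X = minCut wG s t) :
    cutWeight (fun u v => wH u v - |f u v|) X ≤ (2 * ε / (1 - ε)) * fH :=
  stmt3_general wG wH ε hε0 hε1 hGnn hsparsify s t f hskew hcons fH hval hmaxflow X hsX htX hmincut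
end

section
/- Let G be the graph of the previous construction (s joined to clique A, t joined to clique B, A and B disjoint of equal size p ≥ 2). For distinct a_1, a_2 ∈ A and distinct b_1, b_2 ∈ B, let G' be obtained from G by removing edges {a_1, a_2} and {b_1, b_2} and adding edges {a_1, b_1} and {a_2, b_2}. Then s and t are connected in G', every vertex of A ∪ B still has degree p, and the minimum s-t cut value of G' equals 2. -/
/-!
The paths `s a₁ b₁ t` and `s a₂ b₂ t` are edge-disjoint, and a walk from inside a cut to outside
crosses it, so every `s`-`t` cut has value at least 2; the cut around `{s} ∪ A` is crossed only by
the new edges `a₁b₁` and `a₂b₂`. A vertex of `A` keeps its degree because it loses at most the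
clique edge `a₁a₂` and gains the matching cross edge. Exchanging the indices 1, 2 or the sides
`(s, A)`, `(t, B)` preserves the construction, so only `a₁` and an untouched vertex of `A` need
to be checked.
-/

open Finset
open scoped Classical

lemma Finset.pair_eq_pair_iff {α : Type*} [DecidableEq α] {x y z w : α} :
    ({x, y} : Finset α) = {z, w} ↔ x = z ∧ y = w ∨ x = w ∧ y = z := by
  rw [← coe_inj, coe_pair, coe_pair, Set.pair_eq_pair_iff]

namespace SimpleGraph

variable {V : Type*} [Fintype V] [DecidableEq V] {G : SimpleGraph V}

lemma sum_cut_eq_card_filter (X : Finset V) :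
    ∑ u ∈ X, ∑ v ∈ Xᶜ, (if G.Adj u v then (1 : ℕ) else 0) =
      #{q ∈ X ×ˢ Xᶜ | G.Adj q.1 q.2} := by
  rw [← sum_product', sum_boole, Nat.cast_id]

lemma two_le_sum_cut_of_edges_disjoint {s t : V} (P Q : G.Walk s t)
    (hPQ : P.edges.Disjoint Q.edges) {X : Finset V} (hs : s ∈ X) (ht : t ∉ X) :
    2 ≤ ∑ u ∈ X, ∑ v ∈ Xᶜ, (if G.Adj u v then (1 : ℕ) else 0) := by
  obtain ⟨d, hdP, hd⟩ := P.exists_boundary_dart X hs ht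
  obtain ⟨e, heQ, he⟩ := Q.exists_boundary_dart X hs ht
  have hde : d ≠ e := by
    rintro rfl
    exact hPQ (List.mem_map_of_mem hdP) (List.mem_map_of_mem heQ)
  rw [sum_cut_eq_card_filter, Nat.succ_le_iff, one_lt_card]
  refine ⟨d.toProd, ?_, e.toProd, ?_, fun h => hde (Dart.ext _ _ h)⟩
  · exact mem_filter.2 ⟨mem_product.2 ⟨hd.1, mem_compl.2 hd.2⟩, d.adj⟩
  · exact mem_filter.2 ⟨mem_product.2 ⟨he.1, mem_compl.2 he.2⟩, e.adj⟩

end SimpleGraph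

section Switch

open SimpleGraph

variable {V : Type*} [DecidableEq V] {s t : V} {A B : Finset V} {a₁ a₂ b₁ b₂ : V}

def SwitchAdj (s t : V) (A B : Finset V) (a₁ a₂ b₁ b₂ u v : V) : Prop :=
  (((u = s ∧ v ∈ A) ∨ (v = s ∧ u ∈ A) ∨ (u = t ∧ v ∈ B) ∨ (v = t ∧ u ∈ B) ∨
      (u ∈ A ∧ v ∈ A ∧ u ≠ v) ∨ (u ∈ B ∧ v ∈ B ∧ u ≠ v)) ∧
      ({u, v} : Finset V) ≠ {a₁, a₂} ∧ ({u, v} : Finset V) ≠ {b₁, b₂}) ∨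
    ({u, v} : Finset V) = {a₁, b₁} ∨ ({u, v} : Finset V) = {a₂, b₂}

lemma switchAdj_swap_sides {u v : V} :
    SwitchAdj s t A B a₁ a₂ b₁ b₂ u v ↔ SwitchAdj t s B A b₁ b₂ a₁ a₂ u v := by
  simp only [SwitchAdj, pair_comm b₁ a₁, pair_comm b₂ a₂]
  tauto

lemma switchAdj_swap_indices {u v : V} :
    SwitchAdj s t A B a₁ a₂ b₁ b₂ u v ↔ SwitchAdj s t A B a₂ a₁ b₂ b₁ u v := by
  simp only [SwitchAdj, pair_comm a₁ a₂, pair_comm b₁ b₂]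
  tauto

variable {G : SimpleGraph V}

lemma adj_along_switch_path (hadj : ∀ u v, G.Adj u v ↔ SwitchAdj s t A B a₁ a₂ b₁ b₂ u v)
    (hsA : s ∉ A) (htB : t ∉ B) (hAB : Disjoint A B)
    (ha₁ : a₁ ∈ A) (ha₂ : a₂ ∈ A) (hb₁ : b₁ ∈ B) (hb₂ : b₂ ∈ B) :
    G.Adj s a₁ ∧ G.Adj a₁ b₁ ∧ G.Adj b₁ t := by
  have := Finset.disjoint_left.1 hAB
  simp only [hadj, SwitchAdj, ne_eq, pair_eq_pair_iff]
  grind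

lemma neighborFinset_switch_of_ne [Fintype V]
    (hadj : ∀ u v, G.Adj u v ↔ SwitchAdj s t A B a₁ a₂ b₁ b₂ u v)
    (htA : t ∉ A) (hAB : Disjoint A B) (hb₁ : b₁ ∈ B) (hb₂ : b₂ ∈ B)
    {a : V} (ha : a ∈ A) (ha₁ : a ≠ a₁) (ha₂ : a ≠ a₂) :
    G.neighborFinset a = insert s (A.erase a) := by
  have := Finset.disjoint_left.1 hAB
  ext u
  simp only [mem_neighborFinset, hadj, SwitchAdj, ne_eq, pair_eq_pair_iff, mem_insert,
    mem_erase]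
  grind

lemma neighborFinset_switch_first [Fintype V]
    (hadj : ∀ u v, G.Adj u v ↔ SwitchAdj s t A B a₁ a₂ b₁ b₂ u v)
    (hsA : s ∉ A) (htA : t ∉ A) (hAB : Disjoint A B)
    (ha₁ : a₁ ∈ A) (ha₂ : a₂ ∈ A) (ha : a₁ ≠ a₂) (hb₁ : b₁ ∈ B) (hb₂ : b₂ ∈ B) :
    G.neighborFinset a₁ = insert s (insert b₁ ((A.erase a₁).erase a₂)) := by
  have := Finset.disjoint_left.1 hAB
  ext u
  simp only [mem_neighborFinset, hadj, SwitchAdj, ne_eq, pair_eq_pair_iff, mem_insert,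
    mem_erase]
  grind

lemma degree_switch_first [Fintype V]
    (hadj : ∀ u v, G.Adj u v ↔ SwitchAdj s t A B a₁ a₂ b₁ b₂ u v)
    (hsA : s ∉ A) (hsB : s ∉ B) (htA : t ∉ A) (hAB : Disjoint A B)
    (ha₁ : a₁ ∈ A) (ha₂ : a₂ ∈ A) (ha : a₁ ≠ a₂) (hb₁ : b₁ ∈ B) (hb₂ : b₂ ∈ B) :
    G.degree a₁ = #A := by
  have hA : 1 < #A := one_lt_card.2 ⟨_, ha₁, _, ha₂, ha⟩
  rw [← card_neighborFinset_eq_degree,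
    neighborFinset_switch_first hadj hsA htA hAB ha₁ ha₂ ha hb₁ hb₂,
    card_insert_of_notMem (by grind),
    card_insert_of_notMem (by grind [Finset.disjoint_right]),
    card_erase_of_mem (mem_erase.2 ⟨ha.symm, ha₂⟩), card_erase_of_mem ha₁]
  omega

lemma degree_switch_of_ne [Fintype V]
    (hadj : ∀ u v, G.Adj u v ↔ SwitchAdj s t A B a₁ a₂ b₁ b₂ u v)
    (hsA : s ∉ A) (htA : t ∉ A) (hAB : Disjoint A B) (hb₁ : b₁ ∈ B) (hb₂ : b₂ ∈ B)
    {a : V} (ha : a ∈ A) (ha₁ : a ≠ a₁) (ha₂ : a ≠ a₂) :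
    G.degree a = #A := by
  rw [← card_neighborFinset_eq_degree,
    neighborFinset_switch_of_ne hadj htA hAB hb₁ hb₂ ha ha₁ ha₂,
    card_insert_of_notMem (fun h => hsA (mem_of_mem_erase h)), card_erase_of_mem ha]
  have := card_pos.2 ⟨a, ha⟩
  omega

lemma degree_switch_of_mem_left [Fintype V]
    (hadj : ∀ u v, G.Adj u v ↔ SwitchAdj s t A B a₁ a₂ b₁ b₂ u v)
    (hsA : s ∉ A) (hsB : s ∉ B) (htA : t ∉ A) (hAB : Disjoint A B)
    (ha₁ : a₁ ∈ A) (ha₂ : a₂ ∈ A) (ha : a₁ ≠ a₂) (hb₁ : b₁ ∈ B) (hb₂ : b₂ ∈ B)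
    {a : V} (haA : a ∈ A) : G.degree a = #A := by
  by_cases h₁ : a = a₁
  · subst h₁
    exact degree_switch_first hadj hsA hsB htA hAB haA ha₂ ha hb₁ hb₂
  by_cases h₂ : a = a₂
  · subst h₂
    exact degree_switch_first (fun u v => (hadj u v).trans switchAdj_swap_indices)
      hsA hsB htA hAB haA ha₁ (Ne.symm ha) hb₂ hb₁
  exact degree_switch_of_ne hadj hsA htA hAB hb₁ hb₂ haA h₁ h₂

lemma compl_insert_eq_insert [Fintype V]
    (hcover : insert s (insert t (A ∪ B)) = univ) (hst : s ≠ t) (hsB : s ∉ B) (htA : t ∉ A)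
    (hAB : Disjoint A B) : (insert s A)ᶜ = insert t B := by
  ext v
  have hv : v ∈ insert s (insert t (A ∪ B)) := hcover ▸ mem_univ v
  simp only [mem_compl, mem_insert, mem_union] at hv ⊢
  grind [Finset.disjoint_left]

lemma sum_cut_switch_eq_two [Fintype V]
    (hadj : ∀ u v, G.Adj u v ↔ SwitchAdj s t A B a₁ a₂ b₁ b₂ u v)
    (hcover : insert s (insert t (A ∪ B)) = univ) (hst : s ≠ t)
    (hsA : s ∉ A) (hsB : s ∉ B) (htA : t ∉ A) (htB : t ∉ B) (hAB : Disjoint A B)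
    (ha₁ : a₁ ∈ A) (ha₂ : a₂ ∈ A) (ha : a₁ ≠ a₂) (hb₁ : b₁ ∈ B) (hb₂ : b₂ ∈ B) :
    ∑ u ∈ insert s A, ∑ v ∈ (insert s A)ᶜ, (if G.Adj u v then (1 : ℕ) else 0) = 2 := by
  have hcross : {q ∈ insert s A ×ˢ insert t B | G.Adj q.1 q.2} = {(a₁, b₁), (a₂, b₂)} := by
    have := Finset.disjoint_left.1 hAB
    ext ⟨u, v⟩
    simp only [mem_filter, mem_product, mem_insert, mem_singleton, Prod.mk.injEq, hadj,
      SwitchAdj, ne_eq, pair_eq_pair_iff]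
    grind
  rw [sum_cut_eq_card_filter, compl_insert_eq_insert hcover hst hsB htA hAB, hcross,
    card_pair (by simp [ha])]

end Switch

theorem stmt12_general {V : Type*} [Fintype V] [DecidableEq V]
    (s t : V) (A B : Finset V) (hst : s ≠ t)
    (hsA : s ∉ A) (hsB : s ∉ B) (htA : t ∉ A) (htB : t ∉ B)
    (hAB : Disjoint A B)
    (hcover : insert s (insert t (A ∪ B)) = (Finset.univ : Finset V))
    (p : ℕ) (hcardA : A.card = p) (hcardB : B.card = p)
    (a₁ a₂ : V) (ha₁ : a₁ ∈ A) (ha₂ : a₂ ∈ A) (ha : a₁ ≠ a₂)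
    (b₁ b₂ : V) (hb₁ : b₁ ∈ B) (hb₂ : b₂ ∈ B) (hb : b₁ ≠ b₂)
    (G' : SimpleGraph V)
    -- G' is obtained from the base graph by removing edges {a₁,a₂} and {b₁,b₂}
    -- and adding edges {a₁,b₁} and {a₂,b₂}
    (hadj : ∀ u v, G'.Adj u v ↔
      ((((u = s ∧ v ∈ A) ∨ (v = s ∧ u ∈ A) ∨ (u = t ∧ v ∈ B) ∨ (v = t ∧ u ∈ B) ∨
          (u ∈ A ∧ v ∈ A ∧ u ≠ v) ∨ (u ∈ B ∧ v ∈ B ∧ u ≠ v)) ∧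
          ({u, v} : Finset V) ≠ {a₁, a₂} ∧ ({u, v} : Finset V) ≠ {b₁, b₂}) ∨
        ({u, v} : Finset V) = {a₁, b₁} ∨ ({u, v} : Finset V) = {a₂, b₂})) :
    G'.Reachable s t ∧
      (∀ v : V, v ∈ A ∪ B → G'.degree v = p) ∧
      (∀ X : Finset V, s ∈ X → t ∉ X →
        2 ≤ ∑ u ∈ X, ∑ v ∈ Xᶜ, (if G'.Adj u v then (1 : ℕ) else 0)) ∧
      (∃ X : Finset V, s ∈ X ∧ t ∉ X ∧
        ∑ u ∈ X, ∑ v ∈ Xᶜ, (if G'.Adj u v then (1 : ℕ) else 0) = 2) := by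
  change ∀ u v, G'.Adj u v ↔ SwitchAdj s t A B a₁ a₂ b₁ b₂ u v at hadj
  have hadj₂ u v := (hadj u v).trans switchAdj_swap_indices
  have hadjB u v := (hadj u v).trans switchAdj_swap_sides
  obtain ⟨hs₁, h₁, ht₁⟩ := adj_along_switch_path hadj hsA htB hAB ha₁ ha₂ hb₁ hb₂
  obtain ⟨hs₂, h₂, ht₂⟩ := adj_along_switch_path hadj₂ hsA htB hAB ha₂ ha₁ hb₂ hb₁
  let P : G'.Walk s t := .cons hs₁ (.cons h₁ (.cons ht₁ .nil))
  let Q : G'.Walk s t := .cons hs₂ (.cons h₂ (.cons ht₂ .nil))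
  have hPQ : P.edges.Disjoint Q.edges := by
    have := Finset.disjoint_left.1 hAB
    simp only [P, Q, SimpleGraph.Walk.edges_cons, SimpleGraph.Walk.edges_nil,
      List.disjoint_cons_left, List.disjoint_nil_left, List.mem_cons, List.not_mem_nil,
      Sym2.eq_iff]
    grind
  refine ⟨P.reachable, ?_,
    fun X hs ht => SimpleGraph.two_le_sum_cut_of_edges_disjoint P Q hPQ hs ht, insert s A,
    mem_insert_self s A, by grind,
    sum_cut_switch_eq_two hadj hcover hst hsA hsB htA htB hAB ha₁ ha₂ ha hb₁ hb₂⟩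
  intro v hv
  rcases mem_union.1 hv with hvA | hvB
  · rw [← hcardA]
    exact degree_switch_of_mem_left hadj hsA hsB htA hAB ha₁ ha₂ ha hb₁ hb₂ hvA
  · rw [← hcardB]
    exact degree_switch_of_mem_left hadjB htB htA hsB hAB.symm hb₁ hb₂ hb ha₁ ha₂ hvB

theorem stmt12 {V : Type*} [Fintype V] [DecidableEq V]
    (s t : V) (A B : Finset V) (hst : s ≠ t)
    (hsA : s ∉ A) (hsB : s ∉ B) (htA : t ∉ A) (htB : t ∉ B)
    (hAB : Disjoint A B)
    (hcover : insert s (insert t (A ∪ B)) = (Finset.univ : Finset V))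
    (p : ℕ) (hp : 2 ≤ p) (hcardA : A.card = p) (hcardB : B.card = p)
    (a₁ a₂ : V) (ha₁ : a₁ ∈ A) (ha₂ : a₂ ∈ A) (ha : a₁ ≠ a₂)
    (b₁ b₂ : V) (hb₁ : b₁ ∈ B) (hb₂ : b₂ ∈ B) (hb : b₁ ≠ b₂)
    (G' : SimpleGraph V)
    -- G' is obtained from the base graph by removing edges {a₁,a₂} and {b₁,b₂}
    -- and adding edges {a₁,b₁} and {a₂,b₂}
    (hadj : ∀ u v, G'.Adj u v ↔
      ((((u = s ∧ v ∈ A) ∨ (v = s ∧ u ∈ A) ∨ (u = t ∧ v ∈ B) ∨ (v = t ∧ u ∈ B) ∨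
          (u ∈ A ∧ v ∈ A ∧ u ≠ v) ∨ (u ∈ B ∧ v ∈ B ∧ u ≠ v)) ∧
          ({u, v} : Finset V) ≠ {a₁, a₂} ∧ ({u, v} : Finset V) ≠ {b₁, b₂}) ∨
        ({u, v} : Finset V) = {a₁, b₁} ∨ ({u, v} : Finset V) = {a₂, b₂})) :
    G'.Reachable s t ∧
      (∀ v : V, v ∈ A ∪ B → G'.degree v = p) ∧
      (∀ X : Finset V, s ∈ X → t ∉ X →
        2 ≤ ∑ u ∈ X, ∑ v ∈ Xᶜ, (if G'.Adj u v then (1 : ℕ) else 0)) ∧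
      (∃ X : Finset V, s ∈ X ∧ t ∉ X ∧
        ∑ u ∈ X, ∑ v ∈ Xᶜ, (if G'.Adj u v then (1 : ℕ) else 0) = 2) :=
  stmt12_general s t A B hst hsA hsB htA htB hAB hcover p hcardA hcardB a₁ a₂ ha₁ ha₂ ha b₁ b₂ hb₁
    hb₂ hb G' hadj
end
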